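/- Fix σ ∈ (0,π/2) and for ω > 0 small set l_σ(ω) = π/2 − ω·cot(σ). Then, as ω → 0⁺, the point x_{l_σ(ω),ω} converges to cos(σ)·k + sin(σ)·j = (0,0,sin σ, cos σ). (Thus the directional limit at (π/2,0) of the midpoint map (l,ω) ↦ x_{l,ω} along the line of slope determined by σ is the point x_σ on the great circle through k and j at distance σ from k, and in particular the map (l,ω) ↦ x_{l,ω} has no continuous extension to (π/2,0).) -/

import Mathlib

/-!
Along the line `l = π/2 - ω cot σ` put `t = cot σ`. Then `x_{l,ω}` is the unit vector in the
direction of `v(ω) = (-(cos 2l + cos 2ω)/2, 0, sin 2ω/√2, sin 2l/√2)`, because `E(l,ω)` is exactly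
the Euclidean norm of this vector. Since `v(0) = 0`, as `ω → 0⁺` the direction of `v(ω)` tends to
that of `v'(0) = (0, 0, √2, √2 t)`, a positive multiple of `(0, 0, sin σ, cos σ)`.
-/

open Real

/-- `E(l,ω) = √((cos²l + sin²ω)(sin²l + cos²ω))`. -/
noncomputable def Efun (l ω : ℝ) : ℝ :=
  Real.sqrt ((Real.cos l ^ 2 + Real.sin ω ^ 2) * (Real.sin l ^ 2 + Real.cos ω ^ 2))

/-- The midpoint `x_{l,ω}` of the edge `α`. -/
noncomputable def xlw (l ω : ℝ) : Fin 4 → ℝ :=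
  (Efun l ω)⁻¹ •
    ![(-(Real.cos (2*l) + Real.cos (2*ω))) / 2, 0,
      Real.sin (2*ω) / Real.sqrt 2, Real.sin (2*l) / Real.sqrt 2]

open Filter Topology

lemma inv_norm_smul_smul_of_pos {F : Type*} [NormedAddCommGroup F] [NormedSpace ℝ F]
    {c : ℝ} (hc : 0 < c) (u : F) : ‖c • u‖⁻¹ • c • u = ‖u‖⁻¹ • u := by
  rw [norm_smul, norm_of_nonneg hc.le, smul_smul]
  congr 1
  field_simp

lemma tendsto_inv_norm_smul_of_hasDerivAt {F : Type*} [NormedAddCommGroup F] [NormedSpace ℝ F]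
    {v : ℝ → F} {w : F} (hv : HasDerivAt v w 0) (hv0 : v 0 = 0) (hw : w ≠ 0) :
    Tendsto (fun t => ‖v t‖⁻¹ • v t) (𝓝[>] 0) (𝓝 (‖w‖⁻¹ • w)) := by
  have hslope : Tendsto (fun t => t⁻¹ • v t) (𝓝[>] 0) (𝓝 w) := by
    simpa [hv0] using hv.tendsto_slope_zero_right
  have hcont : ContinuousAt (fun u : F => ‖u‖⁻¹ • u) w :=
    (continuous_norm.continuousAt.inv₀ (norm_ne_zero_iff.mpr hw)).smul continuousAt_id
  refine (hcont.tendsto.comp hslope).congr' ?_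
  filter_upwards [self_mem_nhdsWithin] with t (ht : 0 < t)
  exact inv_norm_smul_smul_of_pos (inv_pos.mpr ht) (v t)

noncomputable def unnormalizedMidpoint (l ω : ℝ) : EuclideanSpace ℝ (Fin 4) :=
  !₂[-(cos (2 * l) + cos (2 * ω)) / 2, 0, sin (2 * ω) / √2, sin (2 * l) / √2]

lemma Efun_eq_norm_unnormalizedMidpoint (l ω : ℝ) : Efun l ω = ‖unnormalizedMidpoint l ω‖ := by
  rw [Efun, EuclideanSpace.norm_eq]
  congr 1
  simp only [unnormalizedMidpoint, Fin.sum_univ_four, Real.norm_eq_abs, sq_abs, Fin.isValue,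
    Matrix.cons_val_zero, Matrix.cons_val_one, Matrix.cons_val, div_pow, mul_pow, ne_eq,
    OfNat.ofNat_ne_zero, not_false_eq_true, zero_pow, add_zero, Nat.ofNat_nonneg, sq_sqrt,
    cos_two_mul, sin_two_mul, sin_sq]
  ring

lemma xlw_eq_ofLp_inv_norm_smul (l ω : ℝ) :
    xlw l ω = WithLp.ofLp (‖unnormalizedMidpoint l ω‖⁻¹ • unnormalizedMidpoint l ω) := by
  rw [xlw, Efun_eq_norm_unnormalizedMidpoint]
  rfl

lemma unnormalizedMidpoint_pi_div_two_zero : unnormalizedMidpoint (π / 2) 0 = 0 := by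
  ext i
  fin_cases i <;> simp [unnormalizedMidpoint, show 2 * (π / 2) = π by ring]

lemma hasDerivAt_unnormalizedMidpoint_line (t : ℝ) :
    HasDerivAt (fun ω => unnormalizedMidpoint (π / 2 - ω * t) ω) !₂[0, 0, √2, √2 * t] 0 := by
  have hl : HasDerivAt (fun ω : ℝ => 2 * (π / 2 - ω * t)) (-(2 * t)) 0 := by
    simpa using (((hasDerivAt_id (0 : ℝ)).mul_const t).const_sub (π / 2)).const_mul 2
  have hω : HasDerivAt (fun ω : ℝ => 2 * ω) 2 0 := by
    simpa using (hasDerivAt_id (0 : ℝ)).const_mul 2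
  have hπ : 2 * (π / 2) = π := by ring
  have hcoord : HasDerivAt (fun ω => WithLp.ofLp (unnormalizedMidpoint (π / 2 - ω * t) ω))
      ![0, 0, √2, √2 * t] 0 := by
    rw [hasDerivAt_pi]
    intro i
    fin_cases i
    · exact ((hl.cos.add hω.cos).neg.div_const 2).congr_deriv (by simp [hπ])
    · exact hasDerivAt_const _ _
    · exact (hω.sin.div_const √2).congr_deriv (by field_simp; simp)
    · exact (hl.sin.div_const √2).congr_deriv (by simp [hπ]; field_simp; simp [mul_comm])
  exact (PiLp.continuousLinearEquiv 2 ℝ (fun _ : Fin 4 => ℝ)).symm.hasFDerivAt.comp_hasDerivAt 0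
    hcoord

/-- fixing `σ ∈ (0,π/2)` and letting `l_σ(ω) = π/2 − ω·cot σ`, the midpoint
`x_{l_σ(ω),ω}` converges, as `ω → 0⁺`, to `cos σ · k + sin σ · j = (0,0,sin σ,cos σ)`. -/
theorem stmt11 (σ : ℝ) (hσ : σ ∈ Set.Ioo 0 (π/2)) :
    Filter.Tendsto (fun ω => xlw (π/2 - ω * (Real.cos σ / Real.sin σ)) ω)
      (nhdsWithin 0 (Set.Ioi 0)) (nhds ![0, 0, Real.sin σ, Real.cos σ]) := by
  have hsin : 0 < sin σ := sin_pos_of_pos_of_lt_pi hσ.1 (by linarith [hσ.2, pi_pos])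
  set u : EuclideanSpace ℝ (Fin 4) := !₂[0, 0, sin σ, cos σ]
  have hu : ‖u‖ = 1 := by
    simp [u, EuclideanSpace.norm_eq, Fin.sum_univ_four]
  have hvelocity : !₂[0, 0, √2, √2 * (cos σ / sin σ)] = (√2 / sin σ) • u := by
    ext i
    fin_cases i <;> simp [u] <;> field_simp
  have hc : 0 < √2 / sin σ := by positivity
  have hvelocity_ne : (√2 / sin σ) • u ≠ 0 :=
    smul_ne_zero hc.ne' (norm_ne_zero_iff.mp (hu ▸ one_ne_zero))
  have hdir := tendsto_inv_norm_smul_of_hasDerivAt (hasDerivAt_unnormalizedMidpoint_line _)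
    (by simpa using unnormalizedMidpoint_pi_div_two_zero) (hvelocity ▸ hvelocity_ne)
  rw [hvelocity, inv_norm_smul_smul_of_pos hc, hu, inv_one, one_smul] at hdir
  simp_rw [xlw_eq_ofLp_inv_norm_smul]
  exact ((PiLp.continuous_ofLp 2 _).tendsto u).comp hdir
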